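/- Soundness of the system H_X with respect to 𝔗': every formula provable in H_X (from axiom schemas X1–X4 closed under modus ponens and uniform substitution) is a 𝔗'-{2}-tautology, i.e., evaluates to 2 under every valuation into {0,1,2}. -/
import Mathlib


/-- Propositional formulas over ¬ and →. -/
inductive Fm where
  | var : Nat → Fm
  | neg : Fm → Fm
  | imp : Fm → Fm → Fm
deriving DecidableEq

open Fm

/-- Classical two-valued evaluation (→ is material implication). -/
def evalB (v : Nat → Bool) : Fm → Bool
  | var n => v n
  | neg φ => ! evalB v φ
  | imp φ ψ => !(evalB v φ) || evalB v ψ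

/-- Negation of the three-valued matrix 𝔗'. -/
def gneg : Fin 3 → Fin 3 := ![1, 2, 1]

/-- Implication of the three-valued matrix 𝔗'. -/
def gimp : Fin 3 → Fin 3 → Fin 3 := ![![2, 1, 2], ![2, 2, 2], ![0, 1, 2]]

/-- Evaluation in the three-valued matrix 𝔗'. -/
def eval3 (v : Nat → Fin 3) : Fm → Fin 3
  | var n => v n
  | neg φ => gneg (eval3 v φ)
  | imp φ ψ => gimp (eval3 v φ) (eval3 v ψ)

/-- Uniform substitution of formulas for variables. -/
def subst (s : Nat → Fm) : Fm → Fm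
  | var n => s n
  | neg φ => neg (subst s φ)
  | imp φ ψ => imp (subst s φ) (subst s ψ)

/-- Provability in the Hilbert system H_X: axiom schemas X1–X4,
    closed under modus ponens and uniform substitution. -/
inductive Prov : Fm → Prop where
  | x1 : Prov (imp (var 0) (imp (var 1) (var 0)))
  | x2 : Prov (imp (imp (var 0) (imp (var 1) (var 2)))
           (imp (imp (var 0) (var 1)) (imp (var 0) (var 2))))
  | x3 : Prov (imp (neg (var 0)) (imp (var 0) (var 1)))
  | x4 : Prov (imp (imp (var 0) (neg (var 0))) (neg (var 0)))
  | mp {φ ψ : Fm} : Prov (imp φ ψ) → Prov φ → Prov ψ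
  | sub {φ : Fm} (s : Nat → Fm) : Prov φ → Prov (subst s φ)

/-- Peirce's law ((p → q) → p) → p. -/
def peirceFm : Fm := imp (imp (imp (var 0) (var 1)) (var 0)) (var 0)

lemma eval3_subst (s : Nat → Fm) (φ : Fm) (v : Nat → Fin 3) :
    eval3 v (subst s φ) = eval3 (fun n => eval3 v (s n)) φ := by
  induction φ with
  | var n => rfl
  | neg φ ih => simp [subst, eval3, ih]
  | imp φ ψ ih1 ih2 => simp [subst, eval3, ih1, ih2]

theorem soundness_three_valued :
    ∀ φ : Fm, Prov φ → ∀ v : Nat → Fin 3, eval3 v φ = 2 := by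
  intro φ h
  induction h with
  | x1 => intro v; simp only [eval3]; generalize v 0 = a; generalize v 1 = b
          fin_cases a <;> fin_cases b <;> decide
  | x2 => intro v; simp only [eval3]; generalize v 0 = a; generalize v 1 = b; generalize v 2 = c
          fin_cases a <;> fin_cases b <;> fin_cases c <;> decide
  | x3 => intro v; simp only [eval3]; generalize v 0 = a; generalize v 1 = b
          fin_cases a <;> fin_cases b <;> decide
  | x4 => intro v; simp only [eval3]; generalize v 0 = a
          fin_cases a <;> decide
  | mp h1 h2 ih1 ih2 =>
      intro v
      have a := ih1 v; have b := ih2 v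
      simp only [eval3] at a
      rw [b] at a
      revert a
      generalize eval3 v _ = x
      fin_cases x <;> decide
  | sub s h ih =>
      intro v
      rw [eval3_subst]
      exact ih _
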